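/- Let $H \in S^n$ be a rank-one matrix with $H_{ij} = h_i h_j$ where all $h_i > 0$, and let $W = \mathrm{diag}(h_1,\ldots,h_n)$. Then for any symmetric matrix $M \in S^n$, the unique minimizer over $K \succeq 0$ of $\sum_{i,j} H_{ij}(K_{ij} - M_{ij})^2$ is $K^* = W^{-1/2} \left( (W^{1/2} M W^{1/2})_+ \right) W^{-1/2}$. -/

import Mathlib

/-!
Conjugation by `W^{1/2}` turns the weighted objective into the plain Frobenius distance to
`W^{1/2} M W^{1/2}` and maps the PSD cone bijectively onto itself, so `K ↦ W^{1/2} K W^{1/2}`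
carries minimizers of the weighted problem to Frobenius projections onto the PSD cone.
Uniqueness holds because the squared Frobenius distance is strictly convex and the cone is convex.
-/

open Matrix

noncomputable def frob2 {n : ℕ} (M : Matrix (Fin n) (Fin n) ℝ) : ℝ :=
  Matrix.trace (Mᵀ * M)

def IsPSDProj {n : ℕ} (M P : Matrix (Fin n) (Fin n) ℝ) : Prop :=
  P.PosSemidef ∧ ∀ K : Matrix (Fin n) (Fin n) ℝ, K.PosSemidef →
    frob2 (P - M) ≤ frob2 (K - M)

section Frobenius

variable {n : ℕ}

lemma frob2_eq_sum_sq (X : Matrix (Fin n) (Fin n) ℝ) : frob2 X = ∑ i, ∑ j, X i j ^ 2 := by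
  simp only [frob2, trace, diag, mul_apply, transpose_apply, sq]
  exact Finset.sum_comm

lemma frob2_pos {X : Matrix (Fin n) (Fin n) ℝ} (hX : X ≠ 0) : 0 < frob2 X := by
  rw [frob2, ← conjTranspose_eq_transpose_of_trivial]
  exact (posSemidef_conjTranspose_mul_self X).trace_nonneg.lt_of_ne
    (Ne.symm (trace_conjTranspose_mul_self_eq_zero_iff.not.mpr hX))

lemma frob2_diagonal_mul_mul_diagonal (d : Fin n → ℝ) (X : Matrix (Fin n) (Fin n) ℝ) :
    frob2 (diagonal d * X * diagonal d) = ∑ i, ∑ j, (d i * d j) ^ 2 * X i j ^ 2 := by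
  simp only [frob2_eq_sum_sq, mul_diagonal, diagonal_mul]
  exact Finset.sum_congr rfl fun i _ => Finset.sum_congr rfl fun j _ => by ring

lemma strictConvexOn_frob2_sub (A : Matrix (Fin n) (Fin n) ℝ) :
    StrictConvexOn ℝ Set.univ fun X => frob2 (X - A) := by
  refine ⟨convex_univ, fun X _ Y _ hXY a b _ _ hab => ?_⟩
  have defect : a • frob2 (X - A) + b • frob2 (Y - A)
      = frob2 (a • X + b • Y - A) + a * b * frob2 (X - Y) := by
    simp only [frob2_eq_sum_sq, smul_eq_mul, Finset.mul_sum, ← Finset.sum_add_distrib]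
    refine Finset.sum_congr rfl fun i _ => Finset.sum_congr rfl fun j _ => ?_
    simp only [Matrix.sub_apply, Matrix.add_apply, Matrix.smul_apply, smul_eq_mul]
    linear_combination (A i j ^ 2 - a * X i j ^ 2 - b * Y i j ^ 2) * hab
  have : 0 < a * b * frob2 (X - Y) := by
    have := frob2_pos (sub_ne_zero.mpr hXY)
    positivity
  linarith

end Frobenius

lemma convex_setOf_posSemidef {m : Type*} [Fintype m] :
    Convex ℝ {K : Matrix m m ℝ | K.PosSemidef} :=
  fun _ hK _ hL _ _ ha hb _ => (hK.smul ha).add (hL.smul hb)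

lemma Matrix.PosSemidef.diagonal_mul_mul_diagonal {m : Type*} [Fintype m] [DecidableEq m]
    {K : Matrix m m ℝ} (hK : K.PosSemidef) (d : m → ℝ) :
    (diagonal d * K * diagonal d).PosSemidef := by
  simpa [diagonal_conjTranspose] using hK.mul_mul_conjTranspose_same (diagonal d)

lemma IsPSDProj.eq_of_frob2_sub_eq {n : ℕ} {A P K : Matrix (Fin n) (Fin n) ℝ}
    (hP : IsPSDProj A P) (hK : K.PosSemidef) (hKP : frob2 (K - A) = frob2 (P - A)) :
    K = P := by
  have hPmin : IsMinOn (fun X => frob2 (X - A)) {X | X.PosSemidef} P := fun X hX => hP.2 X hX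
  have hKmin : IsMinOn (fun X => frob2 (X - A)) {X | X.PosSemidef} K := fun X hX =>
    hKP.trans_le (hP.2 X hX)
  exact ((strictConvexOn_frob2_sub A).subset (Set.subset_univ _) convex_setOf_posSemidef)
    |>.eq_of_isMinOn hKmin hPmin hK hP.1

lemma mul_mul_mul_mul_eq_self_of_mul_eq_one {R : Type*} [Monoid R] {a b : R}
    (hab : a * b = 1) (hba : b * a = 1) (x : R) : a * (b * x * b) * a = x := by
  rw [← mul_assoc, ← mul_assoc, hab, one_mul, mul_assoc, hba, mul_one]

theorem weighted_psd_projection_general {n : ℕ}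
    (h : Fin n → ℝ) (hh : ∀ i, 0 < h i)
    (M : Matrix (Fin n) (Fin n) ℝ)
    (Whalf Winvhalf : Matrix (Fin n) (Fin n) ℝ)
    (hWhalf : Whalf = Matrix.diagonal (fun i => Real.sqrt (h i)))
    (hWinvhalf : Winvhalf = Matrix.diagonal (fun i => (Real.sqrt (h i))⁻¹))
    (P : Matrix (Fin n) (Fin n) ℝ)
    (hP : IsPSDProj (Whalf * M * Whalf) P)
    (Kstar : Matrix (Fin n) (Fin n) ℝ)
    (hKstar : Kstar = Winvhalf * P * Winvhalf)
    (obj : Matrix (Fin n) (Fin n) ℝ → ℝ)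
    (hobj : ∀ K, obj K = ∑ i, ∑ j, h i * h j * (K i j - M i j)^2) :
    Kstar.PosSemidef ∧
    (∀ K : Matrix (Fin n) (Fin n) ℝ, K.PosSemidef → obj Kstar ≤ obj K) ∧
    (∀ K : Matrix (Fin n) (Fin n) ℝ, K.PosSemidef → obj K = obj Kstar → K = Kstar) := by
  have hsqrt : ∀ i, Real.sqrt (h i) ≠ 0 := fun i => (Real.sqrt_pos.mpr (hh i)).ne'
  have hW : Whalf * Winvhalf = 1 := by simp [hWhalf, hWinvhalf, hsqrt]
  have hW' : Winvhalf * Whalf = 1 := by simp [hWhalf, hWinvhalf, hsqrt]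
  have hobjW : ∀ K, obj K = frob2 (Whalf * K * Whalf - Whalf * M * Whalf) := fun K => by
    rw [← sub_mul, ← mul_sub, hWhalf, frob2_diagonal_mul_mul_diagonal, hobj]
    simp only [mul_pow, Real.sq_sqrt (hh _).le, Matrix.sub_apply]
  have hconj : ∀ {K}, K.PosSemidef → (Whalf * K * Whalf).PosSemidef := fun hK =>
    hWhalf ▸ hK.diagonal_mul_mul_diagonal _
  have hKstarP : Whalf * Kstar * Whalf = P :=
    hKstar ▸ mul_mul_mul_mul_eq_self_of_mul_eq_one hW hW' P
  refine ⟨hKstar ▸ hWinvhalf ▸ hP.1.diagonal_mul_mul_diagonal _,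
    fun K hK => ?_, fun K hK hKeq => ?_⟩
  · rw [hobjW, hobjW, hKstarP]
    exact hP.2 _ (hconj hK)
  · have hKP : Whalf * K * Whalf = P :=
      hP.eq_of_frob2_sub_eq (hconj hK) (by rw [← hobjW, hKeq, hobjW, hKstarP])
    rw [hKstar, ← hKP, mul_mul_mul_mul_eq_self_of_mul_eq_one hW' hW]

/-- weighted PSD projection with rank-one penalty matrix
`H_{ij} = hᵢhⱼ`: the unique minimizer over `K ⪰ 0` of
`∑_{i,j} hᵢhⱼ (K_{ij} - M_{ij})²` is `W^{-1/2} ((W^{1/2} M W^{1/2})₊) W^{-1/2}`. -/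
theorem weighted_psd_projection {n : ℕ}
    (h : Fin n → ℝ) (hh : ∀ i, 0 < h i)
    (M : Matrix (Fin n) (Fin n) ℝ) (hM : M.IsSymm)
    (Whalf Winvhalf : Matrix (Fin n) (Fin n) ℝ)
    (hWhalf : Whalf = Matrix.diagonal (fun i => Real.sqrt (h i)))
    (hWinvhalf : Winvhalf = Matrix.diagonal (fun i => (Real.sqrt (h i))⁻¹))
    (P : Matrix (Fin n) (Fin n) ℝ)
    (hP : IsPSDProj (Whalf * M * Whalf) P)
    (Kstar : Matrix (Fin n) (Fin n) ℝ)
    (hKstar : Kstar = Winvhalf * P * Winvhalf)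
    (obj : Matrix (Fin n) (Fin n) ℝ → ℝ)
    (hobj : ∀ K, obj K = ∑ i, ∑ j, h i * h j * (K i j - M i j)^2) :
    Kstar.PosSemidef ∧
    (∀ K : Matrix (Fin n) (Fin n) ℝ, K.PosSemidef → obj Kstar ≤ obj K) ∧
    (∀ K : Matrix (Fin n) (Fin n) ℝ, K.PosSemidef → obj K = obj Kstar → K = Kstar) :=
  weighted_psd_projection_general h hh M Whalf Winvhalf hWhalf hWinvhalf P hP Kstar hKstar obj hobj
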